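/- Let r ≥ 1 and n = 2r. Let k, j ∈ {1,…,r} be integers with k + j ≥ r + 2, let 0 < θ < π/(2r), let x > 0, and let φ ∈ ℝ satisfy |φ + π/2 − π/(2r)| < π/r − θ. Then Im( e^{2πi(k−1)/n} · x·e^{iφ} + e^{2πi(j−r)/n} · x·e^{−iφ} ) ≥ 2 · sin((k+j−r−1)·π/n) · sin θ · x. -/

import Mathlib

/-!
Writing `z = x e^{iφ}`, the imaginary part of `e^{ia} z + e^{ib} z̄` is
`x (sin (a + φ) + sin (b - φ)) = 2 x sin ((a + b)/2) cos ((a - b)/2 + φ)` by sum-to-product.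
For `a = 2π(k-1)/n`, `b = 2π(j-r)/n` the first factor is `sin ((k+j-r-1)π/n) ≥ 0`, and the
argument of the cosine is `(φ + π/2 - π/(2r)) + (k-j)π/(2r)`; since `|k - j| ≤ r - 2`, the sector
condition puts it within `π/2 - θ` of `0`, so the cosine is at least `cos (π/2 - θ) = sin θ`.
-/

open Real Complex

lemma im_exp_mul_add_exp_mul_conj (a b x φ : ℝ) :
    (cexp (a * I) * (x * cexp (I * φ)) + cexp (b * I) * (x * cexp (-(I * φ)))).im =
      2 * Real.sin ((a + b) / 2) * Real.cos ((a - b) / 2 + φ) * x := by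
  have hrot : ∀ c d : ℝ, cexp (c * I) * (x * cexp (d * I)) = x * cexp ((c + d : ℝ) * I) := by
    intro c d
    rw [ofReal_add, add_mul, Complex.exp_add]
    ring
  rw [mul_comm I, ← neg_mul, ← ofReal_neg, hrot, hrot, add_im, im_ofReal_mul, im_ofReal_mul,
    exp_ofReal_mul_I_im, exp_ofReal_mul_I_im, ← mul_add, Real.sin_add_sin]
  ring_nf

lemma sin_le_cos_of_abs_le {θ ψ : ℝ} (hθ : -(π / 2) ≤ θ) (hψ : |ψ| ≤ π / 2 - θ) :
    Real.sin θ ≤ Real.cos ψ := by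
  rw [← Real.cos_pi_div_two_sub, ← Real.cos_abs ψ]
  exact Real.cos_le_cos_of_nonneg_of_le_pi (abs_nonneg ψ) (by linarith) hψ

lemma abs_add_mul_pi_div_lt {r ψ d θ : ℝ} (hr : 0 < r) (hψ : |ψ| < π / r - θ)
    (hd : |d| ≤ r - 2) : |ψ + d * (π / (2 * r))| < π / 2 - θ :=
  calc |ψ + d * (π / (2 * r))| ≤ |ψ| + |d| * (π / (2 * r)) :=
        (abs_add_le _ _).trans_eq (by rw [abs_mul, abs_of_pos (by positivity : 0 < π / (2 * r))])
    _ < π / r - θ + (r - 2) * (π / (2 * r)) :=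
        add_lt_add_of_lt_of_le hψ (mul_le_mul_of_nonneg_right hd (by positivity))
    _ = π / 2 - θ := by field_simp; ring

theorem stmt_15 (r : ℕ) (n : ℕ) (hn : n = 2 * r)
    (k j : ℕ) (hkr : k ≤ r) (hjr : j ≤ r)
    (hkj : r + 2 ≤ k + j)
    (θ : ℝ) (hθ1 : 0 < θ)
    (x : ℝ) (hx : 0 < x) (φ : ℝ)
    (hφ : |φ + Real.pi / 2 - Real.pi / (2 * r)| < Real.pi / r - θ) :
    2 * Real.sin (((k : ℝ) + j - r - 1) * Real.pi / n) * Real.sin θ * x ≤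
      (Complex.exp (2 * Real.pi * Complex.I * ((k : ℂ) - 1) / n) *
          (x * Complex.exp (Complex.I * φ)) +
        Complex.exp (2 * Real.pi * Complex.I * ((j : ℂ) - r) / n) *
          (x * Complex.exp (-(Complex.I * φ)))).im := by
  subst hn
  have hkR : (k : ℝ) ≤ r := mod_cast hkr
  have hjR : (j : ℝ) ≤ r := mod_cast hjr
  have hkjR : (r : ℝ) + 2 ≤ k + j := mod_cast hkj
  have hr : (0 : ℝ) < r := by linarith
  have hξ : 2 * π * I * ((k : ℂ) - 1) / ↑(2 * r) = ↑(π * (k - 1) / r) * I := by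
    push_cast; field_simp
  have hζ : 2 * π * I * ((j : ℂ) - r) / ↑(2 * r) = ↑(π * (j - r) / r) * I := by
    push_cast; field_simp
  rw [hξ, hζ, im_exp_mul_add_exp_mul_conj]
  have hsum : (π * (k - 1) / r + π * (j - r) / r) / 2 = ((k : ℝ) + j - r - 1) * π / ↑(2 * r) := by
    push_cast; field_simp; ring
  have hdiff : (π * (k - 1) / r - π * (j - r) / r) / 2 + φ =
      (φ + π / 2 - π / (2 * r)) + ((k : ℝ) - j) * (π / (2 * r)) := by
    field_simp; ring
  have hsin : 0 ≤ 2 * Real.sin (((k : ℝ) + j - r - 1) * π / ↑(2 * r)) := by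
    refine mul_nonneg zero_le_two (Real.sin_nonneg_of_nonneg_of_le_pi ?_ ?_)
    · exact div_nonneg (mul_nonneg (by linarith) pi_pos.le) (Nat.cast_nonneg _)
    · rw [div_le_iff₀ (by push_cast; positivity)]
      push_cast
      nlinarith [pi_pos]
  have hψ : |(φ + π / 2 - π / (2 * r)) + ((k : ℝ) - j) * (π / (2 * r))| < π / 2 - θ :=
    abs_add_mul_pi_div_lt hr hφ (abs_le.2 ⟨by linarith, by linarith⟩)
  have hcos := sin_le_cos_of_abs_le (by linarith [pi_pos]) hψ.le
  rw [hsum, hdiff]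
  exact mul_le_mul_of_nonneg_right (mul_le_mul_of_nonneg_left hcos hsin) hx.le
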